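/- arXiv:2405.01109 — 2 statements merged into one kernel-verified Lean document; each statement's English description precedes it below -/
import Mathlib

section
/- Let g : ℝ^m → ℝ be defined by g(β) = (max_i |β_i|)^p / p for p ≥ 1, and let h(t) = |t|^p / p on ℝ. Then the Fenchel conjugate of g satisfies g*(α) = h*(‖α‖₁) for every α ∈ ℝ^m, where ‖α‖₁ is the ℓ¹-norm. -/
/-- For `g β = (max_i |β_i|)^p / p` on `ℝ^m` with `p ≥ 1`, the Fenchel conjugate
satisfies `g*(α) = h*(‖α‖₁)` where `h t = |t|^p / p` on ℝ (values in `EReal`). -/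
theorem fenchel_conjugate_max_pow (m : ℕ) (hm : 0 < m) (p : ℝ) (hp : 1 ≤ p)
    (α : Fin m → ℝ) :
    (⨆ β : Fin m → ℝ,
        ((∑ i, α i * β i - (⨆ i, |β i|) ^ p / p : ℝ) : EReal)) =
      ⨆ t : ℝ, (((∑ i, |α i|) * t - |t| ^ p / p : ℝ) : EReal) := by
  have hne : Nonempty (Fin m) := ⟨⟨0, hm⟩⟩
  apply le_antisymm
  · refine iSup_le fun β => ?_
    refine le_iSup_of_le (⨆ i, |β i|) ?_
    rw [EReal.coe_le_coe_iff]
    have hb : BddAbove (Set.range fun i => |β i|) :=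
      Set.Finite.bddAbove (Set.finite_range _)
    have ht0 : 0 ≤ ⨆ i, |β i| :=
      le_trans (abs_nonneg (β ⟨0, hm⟩)) (le_ciSup hb ⟨0, hm⟩)
    have h1 : ∑ i, α i * β i ≤ (∑ i, |α i|) * (⨆ i, |β i|) := by
      rw [Finset.sum_mul]
      refine Finset.sum_le_sum fun i _ => ?_
      calc α i * β i ≤ |α i * β i| := le_abs_self _
        _ = |α i| * |β i| := abs_mul _ _
        _ ≤ |α i| * ⨆ j, |β j| :=
            mul_le_mul_of_nonneg_left (le_ciSup hb i) (abs_nonneg _)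
    rw [abs_of_nonneg ht0]
    linarith
  · refine iSup_le fun t => ?_
    refine le_iSup_of_le (fun i => (if 0 ≤ α i then 1 else -1) * |t|) ?_
    rw [EReal.coe_le_coe_iff]
    have h1 : ∑ i, α i * ((if 0 ≤ α i then (1:ℝ) else -1) * |t|)
        = (∑ i, |α i|) * |t| := by
      rw [Finset.sum_mul]
      refine Finset.sum_congr rfl fun i _ => ?_
      split_ifs with h
      · rw [abs_of_nonneg h]; ring
      · rw [abs_of_neg (not_le.mp h)]; ring
    have h2 : (⨆ i, abs ((if 0 ≤ α i then (1:ℝ) else -1) * |t|)) = |t| := by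
      have : (fun i => abs ((if 0 ≤ α i then (1:ℝ) else -1) * |t|)) = fun _ => |t| := by
        funext i
        rw [abs_mul, abs_abs]
        split_ifs <;> norm_num
      rw [this, ciSup_const]
    simp only [h1, h2]
    have h3 : (∑ i, |α i|) * t ≤ (∑ i, |α i|) * |t| :=
      mul_le_mul_of_nonneg_left (le_abs_self t)
        (Finset.sum_nonneg fun i _ => abs_nonneg _)
    linarith
end

section
/- Fixed-point characterization of the proximal operator of σ·‖·‖₁^{p'}/p': let p > 1, p' = p/(p−1), σ > 0, β ∈ ℝ^m. If α* minimizes α ↦ (1/2)‖α − β‖₂² + (σ/p')‖α‖₁^{p'}, then α* = sign(β)·max(|β| − σ‖α*‖₁^{p'−1}, 0) coordinatewise. -/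
open Filter Topology

/-- tangent line inequality for rpow with exponent `q > 1`. -/
lemma tangent_rpow {q : ℝ} (hq : 1 < q) {u v : ℝ} (hu : 0 ≤ u) (hv : 0 ≤ v) :
    v ^ q + q * v ^ (q - 1) * (u - v) ≤ u ^ q := by
  rcases eq_or_lt_of_le hv with h0 | h0
  · rw [← h0, Real.zero_rpow (by positivity), Real.zero_rpow (by linarith)]
    simpa using Real.rpow_nonneg hu q
  · have hs : (-1 : ℝ) ≤ u / v - 1 := by
      have : 0 ≤ u / v := div_nonneg hu h0.le
      linarith
    have hbern := one_add_mul_self_le_rpow_one_add hs hq.le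
    have huv : (1 : ℝ) + (u / v - 1) = u / v := by ring
    rw [huv, Real.div_rpow hu h0.le] at hbern
    have hvq : (0:ℝ) < v ^ q := Real.rpow_pos_of_pos h0 q
    have h1 : (1 + q * (u / v - 1)) * v ^ q ≤ u ^ q := (le_div_iff₀ hvq).mp hbern
    have hv1 : v ^ (q-1) = v ^ q / v := by
      rw [Real.rpow_sub h0, Real.rpow_one]
    rw [hv1]
    have hvne : v ≠ 0 := ne_of_gt h0
    calc v ^ q + q * (v ^ q / v) * (u - v) = (1 + q * (u / v - 1)) * v ^ q := by
          field_simp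
      _ ≤ u ^ q := h1

/-- positive case: if `x > 0` minimizes the 1-D problem then `x = b - σ(S+x)^(q-1)`. -/
lemma onedim_pos {q σ S b x : ℝ} (hq : 1 < q) (hσ : 0 < σ) (hS : 0 ≤ S) (hx : 0 < x)
    (hmin : ∀ y : ℝ, (1/2)*(x-b)^2 + (σ/q)*(S+|x|)^q ≤ (1/2)*(y-b)^2 + (σ/q)*(S+|y|)^q) :
    x = b - σ * (S + |x|) ^ (q - 1) := by
  rw [abs_of_pos hx] at hmin ⊢
  set t := S + x with ht
  have htpos : 0 < t := by positivity
  set D : ℝ → ℝ := fun ε => x - b + ε/2 + σ * (t + ε) ^ (q - 1) with hD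
  have key : ∀ ε : ℝ, 0 ≤ x + ε → 0 ≤ ε * D ε := by
    intro ε hε
    have h1 := hmin (x + ε)
    rw [abs_of_nonneg hε] at h1
    have h2 : S + (x + ε) = t + ε := by ring
    rw [h2] at h1
    have htε : (0:ℝ) ≤ t + ε := by linarith
    have h3 := tangent_rpow hq htpos.le htε
    -- h3 : (t+ε)^q + q*(t+ε)^(q-1)*(t - (t+ε)) ≤ t^q
    have h4 : (t + ε) ^ q - t ^ q ≤ q * (t + ε) ^ (q-1) * ε := by nlinarith [h3]
    have hσq : 0 < σ / q := by positivity
    have h5 : (σ/q) * ((t + ε) ^ q - t ^ q) ≤ (σ/q) * (q * (t + ε) ^ (q-1) * ε) :=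
      mul_le_mul_of_nonneg_left h4 hσq.le
    have h6 : (σ/q) * (q * (t + ε) ^ (q-1) * ε) = σ * (t + ε) ^ (q-1) * ε := by
      field_simp
    simp only [hD]
    nlinarith [h1, h5, h6]
  have hcont : ContinuousAt D 0 := by
    have hc1 : ContinuousAt (fun ε : ℝ => (t + ε) ^ (q - 1)) 0 := by
      have := (Real.continuousAt_rpow_const (t + 0) (q - 1) (Or.inl (by simpa using htpos.ne')))
      exact this.comp (by fun_prop)
    fun_prop
  have hD0 : D 0 = x - b + σ * t ^ (q - 1) := by simp [hD]
  have hright : 0 ≤ D 0 := by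
    refine ge_of_tendsto (hcont.tendsto.mono_left nhdsWithin_le_nhds :
      Tendsto D (𝓝[>] (0:ℝ)) (𝓝 (D 0))) ?_
    filter_upwards [self_mem_nhdsWithin] with ε (hε : 0 < ε)
    have := key ε (by linarith)
    nlinarith [this]
  have hleft : D 0 ≤ 0 := by
    refine le_of_tendsto (hcont.tendsto.mono_left nhdsWithin_le_nhds :
      Tendsto D (𝓝[<] (0:ℝ)) (𝓝 (D 0))) ?_
    have hmem : Set.Ioo (-x) 0 ∈ 𝓝[<] (0:ℝ) :=
      Ioo_mem_nhdsLT_of_mem (by constructor <;> simp [hx] <;> linarith)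
    filter_upwards [hmem] with ε hε
    have := key ε (by have := hε.1; linarith)
    nlinarith [this, hε.2]
  have : D 0 = 0 := le_antisymm hleft hright
  rw [hD0] at this
  linarith

/-- zero case: if `x = 0` minimizes the 1-D problem then `|b| ≤ σ S^(q-1)`. -/
lemma onedim_zero {q σ S b : ℝ} (hq : 1 < q) (hσ : 0 < σ) (hS : 0 ≤ S)
    (hmin : ∀ y : ℝ, (1/2)*((0:ℝ)-b)^2 + (σ/q)*(S+|(0:ℝ)|)^q ≤ (1/2)*(y-b)^2 + (σ/q)*(S+|y|)^q) :
    |b| ≤ σ * S ^ (q - 1) := by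
  simp only [abs_zero, add_zero] at hmin
  set E : ℝ → ℝ := fun ε => ε/2 + σ * (S + ε) ^ (q - 1) with hE
  have key : ∀ ε : ℝ, 0 < ε → |b| ≤ E ε := by
    intro ε hε
    have htε : (0:ℝ) ≤ S + ε := by linarith
    have h3 := tangent_rpow hq hS htε
    have h4 : (S + ε) ^ q - S ^ q ≤ q * (S + ε) ^ (q-1) * ε := by nlinarith [h3]
    have hσq : 0 < σ / q := by positivity
    have h5 : (σ/q) * ((S + ε) ^ q - S ^ q) ≤ (σ/q) * (q * (S + ε) ^ (q-1) * ε) :=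
      mul_le_mul_of_nonneg_left h4 hσq.le
    have h6 : (σ/q) * (q * (S + ε) ^ (q-1) * ε) = σ * (S + ε) ^ (q-1) * ε := by
      field_simp
    have hp := hmin ε
    rw [abs_of_pos hε] at hp
    have hm := hmin (-ε)
    rw [abs_neg, abs_of_pos hε] at hm
    rw [abs_le]
    constructor
    · simp only [hE]; nlinarith [hm, h5, h6]
    · simp only [hE]; nlinarith [hp, h5, h6]
  have hcont : ContinuousAt E 0 := by
    have hc1 : ContinuousAt (fun ε : ℝ => (S + ε) ^ (q - 1)) 0 := by
      have := (Real.continuousAt_rpow_const (S + 0) (q - 1) (Or.inr (by linarith)))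
      exact this.comp (by fun_prop)
    fun_prop
  have hE0 : E 0 = σ * S ^ (q - 1) := by simp [hE]
  have : |b| ≤ E 0 := by
    refine ge_of_tendsto (hcont.tendsto.mono_left nhdsWithin_le_nhds :
      Tendsto E (𝓝[>] (0:ℝ)) (𝓝 (E 0))) ?_
    filter_upwards [self_mem_nhdsWithin] with ε (hε : 0 < ε) using key ε hε
  rwa [hE0] at this

/-- full 1-D characterization. -/
lemma onedim {q σ S b x : ℝ} (hq : 1 < q) (hσ : 0 < σ) (hS : 0 ≤ S)
    (hmin : ∀ y : ℝ, (1/2)*(x-b)^2 + (σ/q)*(S+|x|)^q ≤ (1/2)*(y-b)^2 + (σ/q)*(S+|y|)^q) :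
    x = Real.sign b * max (|b| - σ * (S + |x|) ^ (q - 1)) 0 := by
  rcases lt_trichotomy x 0 with hx | hx | hx
  · -- negative case: apply onedim_pos to (-b, -x)
    have hmin' : ∀ y : ℝ, (1/2)*((-x)-(-b))^2 + (σ/q)*(S+|(-x)|)^q ≤
        (1/2)*(y-(-b))^2 + (σ/q)*(S+|y|)^q := by
      intro y
      have h := hmin (-y)
      have e1 : ((-x)-(-b))^2 = (x - b)^2 := by ring
      have e2 : (y-(-b))^2 = ((-y) - b)^2 := by ring
      rw [e1, e2, abs_neg]
      simpa [abs_neg] using h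
    have h := onedim_pos hq hσ hS (by linarith : 0 < -x) hmin'
    rw [abs_neg] at h
    have hlam : 0 < σ * (S + |x|) ^ (q - 1) := by
      have : 0 < S + |x| := by
        have : 0 < |x| := abs_pos.mpr (ne_of_lt hx)
        linarith
      positivity
    have hb : b < 0 := by nlinarith [h, hlam]
    rw [Real.sign_of_neg hb, abs_of_neg hb]
    have hmax : max (-b - σ * (S + |x|) ^ (q - 1)) 0 = -x := by
      rw [max_eq_left (by linarith)]
      linarith
    rw [hmax]; ring
  · -- zero case
    subst hx
    have h := onedim_zero hq hσ hS hmin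
    have : max (|b| - σ * (S + |(0:ℝ)|) ^ (q - 1)) 0 = 0 := by
      rw [max_eq_right]
      simp only [abs_zero, add_zero]
      linarith
    rw [this, mul_zero]
  · -- positive case
    have h := onedim_pos hq hσ hS hx hmin
    have hlam : 0 < σ * (S + |x|) ^ (q - 1) := by
      have : 0 < S + |x| := by
        have : 0 < |x| := abs_pos.mpr (ne_of_gt hx)
        linarith
      positivity
    have hb : 0 < b := by nlinarith [h, hlam]
    rw [Real.sign_of_pos hb, abs_of_pos hb, one_mul, max_eq_left (by linarith)]
    linarith



/-- Fixed-point characterization of the proximal operator of `σ‖·‖₁^{p'}/p'`: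
let `p > 1`, `p' = p/(p−1)`, `σ > 0`, `β ∈ ℝ^m`. If `α*` minimizes
`α ↦ (1/2)‖α − β‖₂² + (σ/p')‖α‖₁^{p'}`, then coordinatewise
`α*_j = sign(β_j)·max(|β_j| − σ‖α*‖₁^{p'−1}, 0)`. -/
theorem prox_l1_power_fixed_point (m : ℕ) (p σ : ℝ) (hp : 1 < p) (hσ : 0 < σ)
    (β αstar : Fin m → ℝ)
    (hmin : ∀ α : Fin m → ℝ,
      (1 / 2) * ∑ j, (αstar j - β j) ^ 2 +
          (σ / (p / (p - 1))) * (∑ j, |αstar j|) ^ (p / (p - 1)) ≤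
        (1 / 2) * ∑ j, (α j - β j) ^ 2 +
          (σ / (p / (p - 1))) * (∑ j, |α j|) ^ (p / (p - 1))) :
    ∀ j, αstar j =
      Real.sign (β j) * max (|β j| - σ * (∑ i, |αstar i|) ^ (p / (p - 1) - 1)) 0 := by
  
  intro j
  set q : ℝ := p / (p - 1) with hqdef
  have hq : 1 < q := (one_lt_div (by linarith)).mpr (by linarith)
  set S : ℝ := ∑ i ∈ Finset.univ.erase j, |αstar i| with hSdef
  have hS : 0 ≤ S := Finset.sum_nonneg fun i _ => abs_nonneg _
  have hsplit : ∀ f : Fin m → ℝ, ∑ i, f i = f j + ∑ i ∈ Finset.univ.erase j, f i :=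
    fun f => (Finset.add_sum_erase _ f (Finset.mem_univ j)).symm
  have hupd : ∀ (y : ℝ) (F : Fin m → ℝ → ℝ),
      ∑ i, F i (Function.update αstar j y i)
        = F j y + ∑ i ∈ Finset.univ.erase j, F i (αstar i) := by
    intro y F
    rw [hsplit (fun i => F i (Function.update αstar j y i)), Function.update_self]
    congr 1
    refine Finset.sum_congr rfl fun i hi => ?_
    rw [Function.update_of_ne (Finset.ne_of_mem_erase hi)]
  have hmin1 : ∀ y : ℝ, (1/2)*(αstar j - β j)^2 + (σ/q)*(S+|αstar j|)^q ≤
      (1/2)*(y - β j)^2 + (σ/q)*(S+|y|)^q := by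
    intro y
    have h := hmin (Function.update αstar j y)
    have e1 : ∑ i, (Function.update αstar j y i - β i) ^ 2
        = (y - β j) ^ 2 + ∑ i ∈ Finset.univ.erase j, (αstar i - β i) ^ 2 :=
      hupd y (fun i z => (z - β i) ^ 2)
    have e2 : ∑ i, |Function.update αstar j y i| = |y| + S :=
      hupd y (fun _ z => |z|)
    have e3 : ∑ i, (αstar i - β i) ^ 2
        = (αstar j - β j) ^ 2 + ∑ i ∈ Finset.univ.erase j, (αstar i - β i) ^ 2 :=
      hsplit _
    have e4 : ∑ i, |αstar i| = |αstar j| + S := hsplit _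
    rw [e1, e2, e3, e4] at h
    have c1 : |αstar j| + S = S + |αstar j| := by ring
    have c2 : |y| + S = S + |y| := by ring
    rw [c1, c2] at h
    linarith
  have hT : ∑ i, |αstar i| = S + |αstar j| := by
    rw [hsplit fun i => |αstar i|]; ring
  rw [hT]
  exact onedim hq hσ hS hmin1
end
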